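/- arXiv:2002.00273 — 5 statements merged into one kernel-verified Lean document; each statement's English description precedes it below -/
import Mathlib

section
/- The sixth-order Krall differential expression ℓ_K[y](x) = (x²−1)³y⁽⁶⁾ + 18x(x²−1)²y⁽⁵⁾ + (x²−1)((3A+3B+96)x² − 3A − 3B − 36)y⁽⁴⁾ + (24A+24B+168)x(x²−1)y‴ + ((12AB+42A+42B+72)x² + (12B−12A)x − 12AB − 30A − 30B − 72)y″ + ((24AB+12A+12B)x + 12B − 12A)y′ is equal, for any six-times differentiable function y on (−1,1), to the Lagrangian symmetric form −((1−x²)³y‴)‴ + ((1−x²)(12+(3A+3B+6)(1−x²))y″)″ − (((6A−6B−12AB)x² + (12A−12B)x + 12AB + 18A + 18B + 24)y′)′. -/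
open Set Filter Topology intervalIntegral

noncomputable def krallAlpha (A B : ℝ) : ℝ := 3*A + 3*B + 6

noncomputable def krallPi (A B : ℝ) (x : ℝ) : ℝ :=
  (-6*A - 6*B - 12*A*B)*x^2 + (12*A - 12*B)*x + (12*A*B + 18*A + 18*B + 24)

/-- The sixth-order Krall differential expression, expanded form. -/
noncomputable def lK (A B : ℝ) (y : ℝ → ℝ) (x : ℝ) : ℝ :=
  (x^2 - 1)^3 * iteratedDeriv 6 y x
  + 18*x*(x^2 - 1)^2 * iteratedDeriv 5 y x
  + (x^2 - 1)*((3*A + 3*B + 96)*x^2 - 3*A - 3*B - 36) * iteratedDeriv 4 y x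
  + (24*A + 24*B + 168)*x*(x^2 - 1) * iteratedDeriv 3 y x
  + ((12*A*B + 42*A + 42*B + 72)*x^2 + (12*B - 12*A)*x - 12*A*B - 30*A - 30*B - 72)
      * iteratedDeriv 2 y x
  + ((24*A*B + 12*A + 12*B)*x + 12*B - 12*A) * deriv y x

/-- The sixth-order Krall differential expression, Lagrangian symmetric form. -/
noncomputable def lKsym (A B : ℝ) (y : ℝ → ℝ) (x : ℝ) : ℝ :=
  - iteratedDeriv 3 (fun t => (1 - t^2)^3 * iteratedDeriv 3 y t) x
  + iteratedDeriv 2 (fun t => (1 - t^2)*(12 + krallAlpha A B * (1 - t^2)) * iteratedDeriv 2 y t) x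
  - deriv (fun t => krallPi A B t * deriv y t) x

/-- Λ[f](x) = −((1−x²)³f‴(x))′ + (1−x²)(12+α(1−x²))f″(x). -/
noncomputable def LamK (A B : ℝ) (f : ℝ → ℝ) (x : ℝ) : ℝ :=
  - deriv (fun t => (1 - t^2)^3 * iteratedDeriv 3 f t) x
  + (1 - x^2)*(12 + krallAlpha A B * (1 - x^2)) * iteratedDeriv 2 f x

/-- [f,1]_K(x) = −((1−x²)³f‴)″ + ((1−x²)(12+α(1−x²))f″)′ − π(x)f′(x). -/
noncomputable def concOne (A B : ℝ) (f : ℝ → ℝ) (x : ℝ) : ℝ :=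
  - iteratedDeriv 2 (fun t => (1 - t^2)^3 * iteratedDeriv 3 f t) x
  + deriv (fun t => (1 - t^2)*(12 + krallAlpha A B * (1 - t^2)) * iteratedDeriv 2 f t) x
  - krallPi A B x * deriv f x

/-- The bilinear concomitant [f,g]_K of the Krall expression (real-valued case). -/
noncomputable def conc (A B : ℝ) (f g : ℝ → ℝ) (x : ℝ) : ℝ :=
  concOne A B f x * g x - concOne A B g x * f x
  - LamK A B f x * deriv g x + LamK A B g x * deriv f x
  - (1 - x^2)^3 * (iteratedDeriv 3 f x * iteratedDeriv 2 g x
      - iteratedDeriv 2 f x * iteratedDeriv 3 g x)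


/-! All three coefficients of the symmetric form are polynomials, so the general Leibniz rule
expands `(p · y⁽ᵐ⁾)⁽ⁿ⁾` as `∑ᵢ (n choose i) p⁽ⁱ⁾ y⁽ⁿ⁻ⁱ⁺ᵐ⁾`; collecting the terms by order of
derivative of `y` gives the expanded form. -/

open Polynomial

section

variable {𝕜 F : Type*} [NontriviallyNormedField 𝕜] [NormedAddCommGroup F] [NormedSpace 𝕜 F]

theorem Polynomial.iteratedDeriv_eval (p : 𝕜[X]) (k : ℕ) :
    iteratedDeriv k (fun t => p.eval t) = fun t => (derivative^[k] p).eval t := by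
  induction k generalizing p with
  | zero => simp
  | succ k ih =>
    simp only [iteratedDeriv_succ', Function.iterate_succ_apply, ← ih]
    congr 1
    ext t
    exact Polynomial.deriv p

theorem iteratedDeriv_iteratedDeriv (k m : ℕ) (f : 𝕜 → F) :
    iteratedDeriv k (iteratedDeriv m f) = iteratedDeriv (k + m) f := by
  simp only [iteratedDeriv_eq_iterate, Function.iterate_add]
  rfl

theorem ContDiffAt.iteratedDeriv_right {f : 𝕜 → F} {x : 𝕜} {n : WithTop ℕ∞} {m i : ℕ}
    (hf : ContDiffAt 𝕜 n f x) (hmn : m + i ≤ n) : ContDiffAt 𝕜 m (iteratedDeriv i f) x :=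
  show ContDiffAt 𝕜 m (fun t => iteratedFDeriv 𝕜 i f t fun _ => 1) x from
    (ContinuousMultilinearMap.apply 𝕜 (fun _ : Fin i => 𝕜) F fun _ => 1).contDiff.contDiffAt.comp x
      (hf.iteratedFDeriv_right hmn)

theorem iteratedDeriv_eval_mul_iteratedDeriv (p : 𝕜[X]) {y : 𝕜 → 𝕜} {x : 𝕜} {n m : ℕ}
    (hy : ContDiffAt 𝕜 (n + m) y x) :
    iteratedDeriv n (fun t => p.eval t * iteratedDeriv m y t) x =
      ∑ i ∈ Finset.range (n + 1),
        n.choose i * (derivative^[i] p).eval x * iteratedDeriv (n - i + m) y x := by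
  have hp : ContDiff 𝕜 n fun t => p.eval t := by simpa using p.contDiff_aeval (𝕜 := 𝕜) n
  rw [iteratedDeriv_fun_mul hp.contDiffAt (hy.iteratedDeriv_right le_rfl)]
  simp only [Polynomial.iteratedDeriv_eval, iteratedDeriv_iteratedDeriv]

end

theorem krall_expression_lagrangian_symmetric_general (A B : ℝ)
    (y : ℝ → ℝ) (hy : ContDiffOn ℝ 6 y (Set.Ioo (-1 : ℝ) 1)) :
    ∀ x ∈ Set.Ioo (-1 : ℝ) 1, lK A B y x = lKsym A B y x := by
  intro x hx
  have hy6 : ContDiffAt ℝ 6 y x := hy.contDiffAt (isOpen_Ioo.mem_nhds hx)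
  have term3 : (fun t => (1 - t ^ 2) ^ 3 * iteratedDeriv 3 y t)
      = fun t => ((1 - X ^ 2) ^ 3 : ℝ[X]).eval t * iteratedDeriv 3 y t := by simp
  have term2 : (fun t => (1 - t ^ 2) * (12 + krallAlpha A B * (1 - t ^ 2)) * iteratedDeriv 2 y t)
      = fun t => ((1 - X ^ 2) * (12 + C (krallAlpha A B) * (1 - X ^ 2))).eval t
        * iteratedDeriv 2 y t := by simp
  have term1 : deriv (fun t => krallPi A B t * deriv y t) x = iteratedDeriv 1 (fun t =>
      (C (-6*A - 6*B - 12*A*B) * X ^ 2 + C (12*A - 12*B) * X + C (12*A*B + 18*A + 18*B + 24)).eval t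
        * iteratedDeriv 1 y t) x := by
    simp [krallPi]
  rw [lK, lKsym, term3, term2, term1, iteratedDeriv_eval_mul_iteratedDeriv _ hy6,
    iteratedDeriv_eval_mul_iteratedDeriv _ (hy6.of_le (by norm_num)),
    iteratedDeriv_eval_mul_iteratedDeriv _ (hy6.of_le (by norm_num))]
  norm_num [Finset.sum_range_succ, derivative_pow, krallAlpha]
  ring

/-- the expanded Krall expression equals its Lagrangian symmetric form. -/
theorem krall_expression_lagrangian_symmetric (A B : ℝ) (hA : 0 < A) (hB : 0 < B)
    (y : ℝ → ℝ) (hy : ContDiffOn ℝ 6 y (Set.Ioo (-1 : ℝ) 1)) :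
    ∀ x ∈ Set.Ioo (-1 : ℝ) 1, lK A B y x = lKsym A B y x :=
  krall_expression_lagrangian_symmetric_general A B y hy
end

section
/- The Frobenius indicial polynomial of the Krall expression ℓ_K at the endpoint x = 1 is ρ(r) = (r−3)(r−2)(r−1)²r(r+1); that is, the indicial roots are r = 3, 2, 1, 1, 0, −1. -/
open Set Filter Topology intervalIntegral

lemma hd_base (s : ℝ) {x : ℝ} (hx : 1 < x) :
    HasDerivAt (fun t : ℝ => (t - 1) ^ s) (s * (x - 1) ^ (s - 1)) x := by
  have hne : x - 1 ≠ 0 := ne_of_gt (by linarith)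
  have h1 : HasDerivAt (fun t : ℝ => t - 1) 1 x := (hasDerivAt_id x).sub_const 1
  have h2 := (Real.hasDerivAt_rpow_const (x := x - 1) (p := s) (Or.inl hne)).comp x h1
  simpa [Function.comp_def] using h2

lemma hd_mono (a s : ℝ) {x : ℝ} (hx : 1 < x) :
    HasDerivAt (fun t : ℝ => a * (t - 1) ^ s) (a * s * (x - 1) ^ (s - 1)) x := by
  simpa [mul_assoc] using (hd_base s hx).const_mul a

lemma deriv_congr_Ioi (f g : ℝ → ℝ) (h : ∀ t ∈ Ioi (1:ℝ), f t = g t) {x : ℝ}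
    (hx : x ∈ Ioi (1:ℝ)) : deriv f x = deriv g x :=
  Filter.EventuallyEq.deriv_eq (Filter.eventuallyEq_of_mem (isOpen_Ioi.mem_nhds hx) h)

lemma rpow_shift (u : ℝ) (hu : 0 < u) (s s' : ℝ) (n : ℕ) (h : s' = s + n) :
    u ^ s' = u ^ s * u ^ n := by rw [h, Real.rpow_add hu, Real.rpow_natCast]

lemma deriv_sum4 (a0 a1 a2 a3 s0 s1 s2 s3 : ℝ) {x : ℝ} (hx : 1 < x) :
    deriv (fun t : ℝ => a0*(t-1)^s0 + a1*(t-1)^s1 + a2*(t-1)^s2 + a3*(t-1)^s3) x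
    = a0*s0*(x-1)^(s0-1) + a1*s1*(x-1)^(s1-1) + a2*s2*(x-1)^(s2-1) + a3*s3*(x-1)^(s3-1) :=
  ((((hd_mono a0 s0 hx).add (hd_mono a1 s1 hx)).add (hd_mono a2 s2 hx)).add
    (hd_mono a3 s3 hx)).deriv

lemma deriv_sum3 (a0 a1 a2 s0 s1 s2 : ℝ) {x : ℝ} (hx : 1 < x) :
    deriv (fun t : ℝ => a0*(t-1)^s0 + a1*(t-1)^s1 + a2*(t-1)^s2) x
    = a0*s0*(x-1)^(s0-1) + a1*s1*(x-1)^(s1-1) + a2*s2*(x-1)^(s2-1) :=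
  (((hd_mono a0 s0 hx).add (hd_mono a1 s1 hx)).add (hd_mono a2 s2 hx)).deriv

lemma krall_key (A B r : ℝ) : ∀ x ∈ Ioi (1:ℝ),
    lKsym A B (fun t => (t - 1) ^ r) x = (x-1)^(r-3) *
      ((r*(r-1)*(r-2)) * ((r+3)*(r+2)*(r+1)*(x-1)^3 + 6*(r+2)*(r+1)*r*(x-1)^2
          + 12*(r+1)*r*(r-1)*(x-1) + 8*r*(r-1)*(r-2))
        + (r*(r-1)) * ((3*A+3*B+6)*(r+2)*(r+1)*(x-1)^3 + 4*(3*A+3*B+6)*(r+1)*r*(x-1)^2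
          + (4*(3*A+3*B+6)-12)*r*(r-1)*(x-1) - 24*(r-1)*(r-2))
        - r * ((-6*A-6*B-12*A*B)*(r+1)*(x-1)^3
          + (2*(-6*A-6*B-12*A*B)+(12*A-12*B))*r*(x-1)^2 + (24*A+24)*(r-1)*(x-1))) := by
  have hy1 : ∀ t ∈ Ioi (1:ℝ), deriv (fun v : ℝ => (v - 1) ^ r) t = r*(t-1)^(r-1) :=
    fun t ht => (hd_base r ht).deriv
  have hy2 : ∀ t ∈ Ioi (1:ℝ),
      deriv (deriv (fun v : ℝ => (v - 1) ^ r)) t = r*(r-1)*(t-1)^(r-2) := by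
    intro t ht
    rw [deriv_congr_Ioi _ (fun u : ℝ => r*(u-1)^(r-1)) hy1 ht, (hd_mono r (r-1) ht).deriv,
      show r-1-1 = r-2 by ring]
  have hy3 : ∀ t ∈ Ioi (1:ℝ),
      deriv (deriv (deriv (fun v : ℝ => (v - 1) ^ r))) t = r*(r-1)*(r-2)*(t-1)^(r-3) := by
    intro t ht
    rw [deriv_congr_Ioi _ (fun u : ℝ => r*(r-1)*(u-1)^(r-2)) hy2 ht,
      (hd_mono (r*(r-1)) (r-2) ht).deriv, show r-2-1 = r-3 by ring]
  -- term 1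
  have hG1 : ∀ t ∈ Ioi (1:ℝ),
      (1 - t^2)^3 * deriv (deriv (deriv (fun v : ℝ => (v - 1) ^ r))) t
      = (-(r*(r-1)*(r-2)))*(t-1)^(r+3) + (-(6*r*(r-1)*(r-2)))*(t-1)^(r+2)
        + (-(12*r*(r-1)*(r-2)))*(t-1)^(r+1) + (-(8*r*(r-1)*(r-2)))*(t-1)^r := by
    intro t ht
    have hu : (0:ℝ) < t - 1 := by simp only [mem_Ioi] at ht; linarith
    rw [hy3 t ht, rpow_shift (t-1) hu (r-3) (r+3) 6 (by push_cast; ring),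
      rpow_shift (t-1) hu (r-3) (r+2) 5 (by push_cast; ring),
      rpow_shift (t-1) hu (r-3) (r+1) 4 (by push_cast; ring),
      rpow_shift (t-1) hu (r-3) r 3 (by push_cast; ring)]
    ring
  have hD1a : ∀ t ∈ Ioi (1:ℝ),
      deriv (fun u : ℝ => (1 - u^2)^3 * deriv (deriv (deriv (fun v : ℝ => (v - 1) ^ r))) u) t
      = (-(r*(r-1)*(r-2)*(r+3)))*(t-1)^(r+2) + (-(6*r*(r-1)*(r-2)*(r+2)))*(t-1)^(r+1)
        + (-(12*r*(r-1)*(r-2)*(r+1)))*(t-1)^r + (-(8*r*(r-1)*(r-2)*r))*(t-1)^(r-1) := by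
    intro t ht
    rw [deriv_congr_Ioi _ (fun u : ℝ => (-(r*(r-1)*(r-2)))*(u-1)^(r+3)
        + (-(6*r*(r-1)*(r-2)))*(u-1)^(r+2) + (-(12*r*(r-1)*(r-2)))*(u-1)^(r+1)
        + (-(8*r*(r-1)*(r-2)))*(u-1)^r) hG1 ht,
      deriv_sum4 _ _ _ _ _ _ _ _ ht,
      show r+3-1 = r+2 by ring, show r+2-1 = r+1 by ring, show r+1-1 = r by ring]
    ring
  have hD1b : ∀ t ∈ Ioi (1:ℝ),
      deriv (deriv (fun u : ℝ =>
        (1 - u^2)^3 * deriv (deriv (deriv (fun v : ℝ => (v - 1) ^ r))) u)) t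
      = (-(r*(r-1)*(r-2)*(r+3)*(r+2)))*(t-1)^(r+1) + (-(6*r*(r-1)*(r-2)*(r+2)*(r+1)))*(t-1)^r
        + (-(12*r*(r-1)*(r-2)*(r+1)*r))*(t-1)^(r-1)
        + (-(8*r*(r-1)*(r-2)*r*(r-1)))*(t-1)^(r-2) := by
    intro t ht
    rw [deriv_congr_Ioi _ (fun u : ℝ => (-(r*(r-1)*(r-2)*(r+3)))*(u-1)^(r+2)
        + (-(6*r*(r-1)*(r-2)*(r+2)))*(u-1)^(r+1)
        + (-(12*r*(r-1)*(r-2)*(r+1)))*(u-1)^r + (-(8*r*(r-1)*(r-2)*r))*(u-1)^(r-1)) hD1a ht,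
      deriv_sum4 _ _ _ _ _ _ _ _ ht,
      show r+2-1 = r+1 by ring, show r+1-1 = r by ring, show r-1-1 = r-2 by ring]
    ring
  have hD1c : ∀ t ∈ Ioi (1:ℝ),
      deriv (deriv (deriv (fun u : ℝ =>
        (1 - u^2)^3 * deriv (deriv (deriv (fun v : ℝ => (v - 1) ^ r))) u))) t
      = (-(r*(r-1)*(r-2)*(r+3)*(r+2)*(r+1)))*(t-1)^r
        + (-(6*r*(r-1)*(r-2)*(r+2)*(r+1)*r))*(t-1)^(r-1)
        + (-(12*r*(r-1)*(r-2)*(r+1)*r*(r-1)))*(t-1)^(r-2)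
        + (-(8*r*(r-1)*(r-2)*r*(r-1)*(r-2)))*(t-1)^(r-3) := by
    intro t ht
    rw [deriv_congr_Ioi _ (fun u : ℝ => (-(r*(r-1)*(r-2)*(r+3)*(r+2)))*(u-1)^(r+1)
        + (-(6*r*(r-1)*(r-2)*(r+2)*(r+1)))*(u-1)^r
        + (-(12*r*(r-1)*(r-2)*(r+1)*r))*(u-1)^(r-1)
        + (-(8*r*(r-1)*(r-2)*r*(r-1)))*(u-1)^(r-2)) hD1b ht,
      deriv_sum4 _ _ _ _ _ _ _ _ ht,
      show r+1-1 = r by ring, show r-1-1 = r-2 by ring, show r-2-1 = r-3 by ring]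
    ring
  -- term 2
  have hG2 : ∀ t ∈ Ioi (1:ℝ),
      (1 - t^2)*(12 + krallAlpha A B * (1 - t^2))
        * deriv (deriv (fun v : ℝ => (v - 1) ^ r)) t
      = (r*(r-1)*krallAlpha A B)*(t-1)^(r+2) + (4*r*(r-1)*krallAlpha A B)*(t-1)^(r+1)
        + (r*(r-1)*(4*krallAlpha A B-12))*(t-1)^r + (-(24*r*(r-1)))*(t-1)^(r-1) := by
    intro t ht
    have hu : (0:ℝ) < t - 1 := by simp only [mem_Ioi] at ht; linarith
    rw [hy2 t ht, rpow_shift (t-1) hu (r-2) (r+2) 4 (by push_cast; ring),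
      rpow_shift (t-1) hu (r-2) (r+1) 3 (by push_cast; ring),
      rpow_shift (t-1) hu (r-2) r 2 (by push_cast; ring),
      rpow_shift (t-1) hu (r-2) (r-1) 1 (by push_cast; ring)]
    ring
  have hD2a : ∀ t ∈ Ioi (1:ℝ),
      deriv (fun u : ℝ => (1 - u^2)*(12 + krallAlpha A B * (1 - u^2))
        * deriv (deriv (fun v : ℝ => (v - 1) ^ r)) u) t
      = (r*(r-1)*krallAlpha A B*(r+2))*(t-1)^(r+1) + (4*r*(r-1)*krallAlpha A B*(r+1))*(t-1)^r
        + (r*(r-1)*(4*krallAlpha A B-12)*r)*(t-1)^(r-1)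
        + (-(24*r*(r-1)*(r-1)))*(t-1)^(r-2) := by
    intro t ht
    rw [deriv_congr_Ioi _ (fun u : ℝ => (r*(r-1)*krallAlpha A B)*(u-1)^(r+2)
        + (4*r*(r-1)*krallAlpha A B)*(u-1)^(r+1)
        + (r*(r-1)*(4*krallAlpha A B-12))*(u-1)^r + (-(24*r*(r-1)))*(u-1)^(r-1)) hG2 ht,
      deriv_sum4 _ _ _ _ _ _ _ _ ht,
      show r+2-1 = r+1 by ring, show r+1-1 = r by ring, show r-1-1 = r-2 by ring]
    ring
  have hD2b : ∀ t ∈ Ioi (1:ℝ),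
      deriv (deriv (fun u : ℝ => (1 - u^2)*(12 + krallAlpha A B * (1 - u^2))
        * deriv (deriv (fun v : ℝ => (v - 1) ^ r)) u)) t
      = (r*(r-1)*krallAlpha A B*(r+2)*(r+1))*(t-1)^r
        + (4*r*(r-1)*krallAlpha A B*(r+1)*r)*(t-1)^(r-1)
        + (r*(r-1)*(4*krallAlpha A B-12)*r*(r-1))*(t-1)^(r-2)
        + (-(24*r*(r-1)*(r-1)*(r-2)))*(t-1)^(r-3) := by
    intro t ht
    rw [deriv_congr_Ioi _ (fun u : ℝ => (r*(r-1)*krallAlpha A B*(r+2))*(u-1)^(r+1)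
        + (4*r*(r-1)*krallAlpha A B*(r+1))*(u-1)^r
        + (r*(r-1)*(4*krallAlpha A B-12)*r)*(u-1)^(r-1)
        + (-(24*r*(r-1)*(r-1)))*(u-1)^(r-2)) hD2a ht,
      deriv_sum4 _ _ _ _ _ _ _ _ ht,
      show r+1-1 = r by ring, show r-1-1 = r-2 by ring, show r-2-1 = r-3 by ring]
    ring
  -- term 3
  have hG3 : ∀ t ∈ Ioi (1:ℝ),
      krallPi A B t * deriv (fun v : ℝ => (v - 1) ^ r) t
      = (r*(-6*A-6*B-12*A*B))*(t-1)^(r+1)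
        + (r*(2*(-6*A-6*B-12*A*B)+(12*A-12*B)))*(t-1)^r + (r*(24*A+24))*(t-1)^(r-1) := by
    intro t ht
    have hu : (0:ℝ) < t - 1 := by simp only [mem_Ioi] at ht; linarith
    rw [hy1 t ht, rpow_shift (t-1) hu (r-1) (r+1) 2 (by push_cast; ring),
      rpow_shift (t-1) hu (r-1) r 1 (by push_cast; ring)]
    simp only [krallPi]; ring
  have hD3 : ∀ t ∈ Ioi (1:ℝ),
      deriv (fun u : ℝ => krallPi A B u * deriv (fun v : ℝ => (v - 1) ^ r) u) t
      = (r*(-6*A-6*B-12*A*B)*(r+1))*(t-1)^r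
        + (r*(2*(-6*A-6*B-12*A*B)+(12*A-12*B))*r)*(t-1)^(r-1)
        + (r*(24*A+24)*(r-1))*(t-1)^(r-2) := by
    intro t ht
    rw [deriv_congr_Ioi _ (fun u : ℝ => (r*(-6*A-6*B-12*A*B))*(u-1)^(r+1)
        + (r*(2*(-6*A-6*B-12*A*B)+(12*A-12*B)))*(u-1)^r + (r*(24*A+24))*(u-1)^(r-1)) hG3 ht,
      deriv_sum3 _ _ _ _ _ _ ht,
      show r+1-1 = r by ring, show r-1-1 = r-2 by ring]
  -- assemble
  intro x hx
  have hu : (0:ℝ) < x - 1 := by simp only [mem_Ioi] at hx; linarith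
  simp only [lKsym, iteratedDeriv_succ, iteratedDeriv_one, iteratedDeriv_zero]
  rw [hD1c x hx, hD2b x hx, hD3 x hx,
    rpow_shift (x-1) hu (r-3) r 3 (by push_cast; ring),
    rpow_shift (x-1) hu (r-3) (r-1) 2 (by push_cast; ring),
    rpow_shift (x-1) hu (r-3) (r-2) 1 (by push_cast; ring)]
  simp only [krallAlpha]
  ring

/-- the Frobenius indicial polynomial of ℓ_K at x = 1 is
(r−3)(r−2)(r−1)²r(r+1), up to a fixed nonzero normalizing constant:
ℓ_K[(x−1)^r](x)/(x−1)^{r−3} → c·ρ(r) as x → 1⁺. -/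
theorem krall_indicial_polynomial (A B : ℝ) (hA : 0 < A) (hB : 0 < B) :
    ∃ c : ℝ, c ≠ 0 ∧ ∀ r : ℝ,
      Filter.Tendsto
        (fun x : ℝ => lKsym A B (fun t => (t - 1) ^ r) x / (x - 1) ^ (r - 3))
        (nhdsWithin 1 (Set.Ioi 1))
        (nhds (c * ((r - 3) * (r - 2) * (r - 1)^2 * r * (r + 1)))) := by
  refine ⟨8, by norm_num, fun r => ?_⟩
  have hT : Filter.Tendsto (fun x : ℝ =>
      ((r*(r-1)*(r-2)) * ((r+3)*(r+2)*(r+1)*(x-1)^3 + 6*(r+2)*(r+1)*r*(x-1)^2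
          + 12*(r+1)*r*(r-1)*(x-1) + 8*r*(r-1)*(r-2))
        + (r*(r-1)) * ((3*A+3*B+6)*(r+2)*(r+1)*(x-1)^3 + 4*(3*A+3*B+6)*(r+1)*r*(x-1)^2
          + (4*(3*A+3*B+6)-12)*r*(r-1)*(x-1) - 24*(r-1)*(r-2))
        - r * ((-6*A-6*B-12*A*B)*(r+1)*(x-1)^3
          + (2*(-6*A-6*B-12*A*B)+(12*A-12*B))*r*(x-1)^2 + (24*A+24)*(r-1)*(x-1))))
      (nhdsWithin 1 (Set.Ioi 1)) (nhds (8 * ((r - 3) * (r - 2) * (r - 1)^2 * r * (r + 1)))) := by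
    have hc : Continuous (fun x : ℝ =>
      ((r*(r-1)*(r-2)) * ((r+3)*(r+2)*(r+1)*(x-1)^3 + 6*(r+2)*(r+1)*r*(x-1)^2
          + 12*(r+1)*r*(r-1)*(x-1) + 8*r*(r-1)*(r-2))
        + (r*(r-1)) * ((3*A+3*B+6)*(r+2)*(r+1)*(x-1)^3 + 4*(3*A+3*B+6)*(r+1)*r*(x-1)^2
          + (4*(3*A+3*B+6)-12)*r*(r-1)*(x-1) - 24*(r-1)*(r-2))
        - r * ((-6*A-6*B-12*A*B)*(r+1)*(x-1)^3
          + (2*(-6*A-6*B-12*A*B)+(12*A-12*B))*r*(x-1)^2 + (24*A+24)*(r-1)*(x-1)))) := by fun_prop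
    have h0 := (hc.tendsto 1).mono_left (nhdsWithin_le_nhds (s := Set.Ioi 1))
    convert h0 using 2
    norm_num
    ring
  refine Filter.Tendsto.congr' ?_ hT
  filter_upwards [self_mem_nhdsWithin] with x hx
  have hx1 : (1:ℝ) < x := hx
  have hne : (x - 1) ^ (r - 3) ≠ (0:ℝ) := (Real.rpow_pos_of_pos (by linarith) _).ne'
  rw [krall_key A B r x hx, mul_div_cancel_left₀ _ hne]
end

section
/- For g(x) = 1−x² and any f ∈ C⁶ on a neighborhood of [−1,1], lim_{x→1} [f, 1−x²]_K(x) = 2Λ[f](1) − 48(A+2)f(1) and lim_{x→−1} [f, 1−x²]_K(x) = −2Λ[f](−1) + 48(B+2)f(−1), where Λ[f](x) = −((1−x²)³f‴(x))′ + (1−x²)(12+α(1−x²))f″(x). -/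
/-
The function `1 - x²` is a quadratic polynomial, so its third derivative vanishes and every term
of `[f, 1 - x²]_K` is a continuous function on a neighbourhood of `[-1, 1]` as soon as `f` is `C⁵`
there. The one-sided limits at `±1` are therefore the values at `±1`, where every term carrying a
factor `1 - x²` drops out and only `±2 Λ[f](±1)` and the multiple of `f(±1)` survive; the
constants `48 (A + 2)` and `48 (B + 2)` are `48 + 2 π(±1)`.
-/

open Set Filter Topology intervalIntegral

section IteratedDeriv

variable {𝕜 F : Type*} [NontriviallyNormedField 𝕜] [NormedAddCommGroup F] [NormedSpace 𝕜 F]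
  {f : 𝕜 → F} {s : Set 𝕜} {n : WithTop ℕ∞}

theorem ContDiffOn.iteratedDeriv_of_isOpen {m : WithTop ℕ∞} {k : ℕ}
    (hf : ContDiffOn 𝕜 n f s) (hs : IsOpen s) (hmn : m + k ≤ n) :
    ContDiffOn 𝕜 m (iteratedDeriv k f) s := by
  induction k generalizing f n with
  | zero => simpa using hf.of_le (by simpa using hmn)
  | succ k ih =>
    rw [iteratedDeriv_succ']
    refine ih (hf.deriv_of_isOpen hs (m := m + k) ?_) le_rfl
    simpa [add_assoc] using hmn

theorem ContDiffOn.continuousOn_iteratedDeriv_of_isOpen {k : ℕ}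
    (hf : ContDiffOn 𝕜 n f s) (hs : IsOpen s) (hkn : k ≤ n) :
    ContinuousOn (iteratedDeriv k f) s :=
  (hf.iteratedDeriv_of_isOpen hs (m := 0) (by simpa using hkn)).continuousOn

end IteratedDeriv

theorem hasDerivAt_one_sub_sq (x : ℝ) : HasDerivAt (fun t : ℝ => 1 - t ^ 2) (-2 * x) x := by
  simpa [mul_comm] using ((hasDerivAt_pow 2 x).const_sub 1)

theorem deriv_one_sub_sq : deriv (fun t : ℝ => 1 - t ^ 2) = fun x => -2 * x :=
  funext fun x => (hasDerivAt_one_sub_sq x).deriv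

theorem iteratedDeriv_two_one_sub_sq : iteratedDeriv 2 (fun t : ℝ => 1 - t ^ 2) = fun _ => -2 := by
  rw [iteratedDeriv_succ, iteratedDeriv_one, deriv_one_sub_sq]
  funext x
  simp

theorem iteratedDeriv_three_one_sub_sq : iteratedDeriv 3 (fun t : ℝ => 1 - t ^ 2) = fun _ => 0 := by
  rw [iteratedDeriv_succ, iteratedDeriv_two_one_sub_sq]
  simp

section Concomitant

variable (A B : ℝ)

theorem concOne_one_sub_sq (x : ℝ) :
    concOne A B (fun t => 1 - t ^ 2) x
      = 4 * x * (12 + krallAlpha A B * (1 - x ^ 2)) + 4 * x * (1 - x ^ 2) * krallAlpha A B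
        + 2 * x * krallPi A B x := by
  have hQ : HasDerivAt
      (fun t : ℝ => (1 - t ^ 2) * (12 + krallAlpha A B * (1 - t ^ 2)) * -2)
      ((-2 * x * (12 + krallAlpha A B * (1 - x ^ 2))
        + (1 - x ^ 2) * (krallAlpha A B * (-2 * x))) * -2) x :=
    ((hasDerivAt_one_sub_sq x).mul
      (((hasDerivAt_one_sub_sq x).const_mul (krallAlpha A B)).const_add 12)).mul_const (-2)
  simp only [concOne, iteratedDeriv_two_one_sub_sq, iteratedDeriv_three_one_sub_sq, mul_zero,
    iteratedDeriv_fun_const_zero, hQ.deriv, deriv_one_sub_sq]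
  ring

theorem LamK_one_sub_sq (x : ℝ) :
    LamK A B (fun t => 1 - t ^ 2) x = -2 * (1 - x ^ 2) * (12 + krallAlpha A B * (1 - x ^ 2)) := by
  simp only [LamK, iteratedDeriv_two_one_sub_sq, iteratedDeriv_three_one_sub_sq, mul_zero,
    deriv_const']
  ring

theorem conc_one_sub_sq (f : ℝ → ℝ) (x : ℝ) :
    conc A B f (fun t => 1 - t ^ 2) x
      = concOne A B f x * (1 - x ^ 2) - concOne A B (fun t => 1 - t ^ 2) x * f x
        + 2 * x * LamK A B f x + LamK A B (fun t => 1 - t ^ 2) x * deriv f x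
        + 2 * (1 - x ^ 2) ^ 3 * iteratedDeriv 3 f x := by
  simp only [conc, deriv_one_sub_sq, iteratedDeriv_two_one_sub_sq, iteratedDeriv_three_one_sub_sq]
  ring

variable {A B} {f : ℝ → ℝ} {U : Set ℝ}

theorem continuousOn_concOne (hU : IsOpen U) (hf : ContDiffOn ℝ 5 f U) :
    ContinuousOn (concOne A B f) U := by
  have hP : ContDiffOn ℝ 2 (fun t => (1 - t ^ 2) ^ 3 * iteratedDeriv 3 f t) U :=
    (contDiff_const.sub (contDiff_id.pow 2)).pow 3 |>.contDiffOn.mul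
      (hf.iteratedDeriv_of_isOpen hU (by norm_num))
  have hQ : ContDiffOn ℝ 1
      (fun t => (1 - t ^ 2) * (12 + krallAlpha A B * (1 - t ^ 2)) * iteratedDeriv 2 f t) U :=
    (contDiff_const.sub (contDiff_id.pow 2)).mul
      (contDiff_const.add (contDiff_const.mul (contDiff_const.sub (contDiff_id.pow 2))))
      |>.contDiffOn.mul (hf.iteratedDeriv_of_isOpen hU (by norm_num))
  have := hP.continuousOn_iteratedDeriv_of_isOpen hU (k := 2) le_rfl
  have := hQ.continuousOn_deriv_of_isOpen hU le_rfl
  have := hf.continuousOn_deriv_of_isOpen hU (by norm_num)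
  unfold concOne krallPi
  fun_prop

theorem continuousOn_LamK (hU : IsOpen U) (hf : ContDiffOn ℝ 4 f U) :
    ContinuousOn (LamK A B f) U := by
  have hP : ContDiffOn ℝ 1 (fun t => (1 - t ^ 2) ^ 3 * iteratedDeriv 3 f t) U :=
    (contDiff_const.sub (contDiff_id.pow 2)).pow 3 |>.contDiffOn.mul
      (hf.iteratedDeriv_of_isOpen hU (by norm_num))
  have := hP.continuousOn_deriv_of_isOpen hU le_rfl
  have := hf.continuousOn_iteratedDeriv_of_isOpen hU (k := 2) (by norm_num)
  unfold LamK
  fun_prop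

theorem continuousOn_conc_one_sub_sq (hU : IsOpen U) (hf : ContDiffOn ℝ 5 f U) :
    ContinuousOn (conc A B f (fun t => 1 - t ^ 2)) U := by
  have := continuousOn_concOne (A := A) (B := B) hU hf
  have := continuousOn_LamK (A := A) (B := B) hU (hf.of_le (by norm_num))
  have := hf.continuousOn
  have := hf.continuousOn_deriv_of_isOpen hU (by norm_num)
  have := hf.continuousOn_iteratedDeriv_of_isOpen hU (k := 3) (by norm_num)
  rw [funext (conc_one_sub_sq A B f)]
  simp only [concOne_one_sub_sq, LamK_one_sub_sq, krallPi]
  fun_prop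

end Concomitant

theorem krall_concomitant_with_one_minus_sq_general (A B : ℝ)
    (f : ℝ → ℝ) (U : Set ℝ) (hU : IsOpen U) (hUI : Set.Icc (-1 : ℝ) 1 ⊆ U)
    (hf : ContDiffOn ℝ 6 f U) :
    Filter.Tendsto (fun x => conc A B f (fun t => 1 - t^2) x)
      (nhdsWithin 1 (Set.Ioo (-1 : ℝ) 1))
      (nhds (2 * LamK A B f 1 - 48*(A + 2) * f 1)) ∧
    Filter.Tendsto (fun x => conc A B f (fun t => 1 - t^2) x)
      (nhdsWithin (-1) (Set.Ioo (-1 : ℝ) 1))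
      (nhds (-2 * LamK A B f (-1) + 48*(B + 2) * f (-1))) := by
  have hcont := continuousOn_conc_one_sub_sq (A := A) (B := B) hU (hf.of_le (by norm_num))
  have tendsto_at {a : ℝ} (ha : a ∈ Icc (-1 : ℝ) 1) :
      Tendsto (conc A B f (fun t => 1 - t ^ 2)) (𝓝[Ioo (-1) 1] a)
        (𝓝 (conc A B f (fun t => 1 - t ^ 2) a)) :=
    (hcont.continuousAt (hU.mem_nhds (hUI ha))).tendsto.mono_left nhdsWithin_le_nhds
  have value_one : conc A B f (fun t => 1 - t ^ 2) 1 = 2 * LamK A B f 1 - 48 * (A + 2) * f 1 := by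
    rw [conc_one_sub_sq, concOne_one_sub_sq, LamK_one_sub_sq, krallPi]
    ring
  have value_neg_one : conc A B f (fun t => 1 - t ^ 2) (-1)
      = -2 * LamK A B f (-1) + 48 * (B + 2) * f (-1) := by
    rw [conc_one_sub_sq, concOne_one_sub_sq, LamK_one_sub_sq, krallPi]
    ring
  exact ⟨value_one ▸ tendsto_at (by norm_num), value_neg_one ▸ tendsto_at (by norm_num)⟩

/-- lim_{x→1}[f,1−x²]_K = 2Λ[f](1) − 48(A+2)f(1) and
lim_{x→−1}[f,1−x²]_K = −2Λ[f](−1) + 48(B+2)f(−1). -/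
theorem krall_concomitant_with_one_minus_sq (A B : ℝ) (hA : 0 < A) (hB : 0 < B)
    (f : ℝ → ℝ) (U : Set ℝ) (hU : IsOpen U) (hUI : Set.Icc (-1 : ℝ) 1 ⊆ U)
    (hf : ContDiffOn ℝ 6 f U) :
    Filter.Tendsto (fun x => conc A B f (fun t => 1 - t^2) x)
      (nhdsWithin 1 (Set.Ioo (-1 : ℝ) 1))
      (nhds (2 * LamK A B f 1 - 48*(A + 2) * f 1)) ∧
    Filter.Tendsto (fun x => conc A B f (fun t => 1 - t^2) x)
      (nhdsWithin (-1) (Set.Ioo (-1 : ℝ) 1))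
      (nhds (-2 * LamK A B f (-1) + 48*(B + 2) * f (-1))) :=
  krall_concomitant_with_one_minus_sq_general A B f U hU hUI hf
end

section
/- The function g(x) = (1−x²)³ satisfies lim_{x→±1}[f,(1−x²)³]_K(x) = 0 for every f ∈ C⁶ on a neighborhood of [−1,1]. -/
open Set Filter Topology intervalIntegral

/- ============ auxiliary lemmas ============ -/

lemma contDiffOn_deriv_step {f : ℝ → ℝ} {U : Set ℝ} (hU : IsOpen U) {n : ℕ}
    (hf : ContDiffOn ℝ (n+1 : ℕ) f U) :
    DifferentiableOn ℝ f U ∧ ContDiffOn ℝ (n : ℕ) (deriv f) U := by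
  have h : ContDiffOn ℝ ((n : WithTop ℕ∞) + 1) f U := by exact_mod_cast hf
  rw [contDiffOn_succ_iff_deriv_of_isOpen hU] at h
  exact ⟨h.1, h.2.2⟩

lemma hasDerivAt_poly6 (a0 a1 a2 a3 a4 a5 a6 x : ℝ) :
    HasDerivAt (fun t : ℝ => a0 + a1*t + a2*t^2 + a3*t^3 + a4*t^4 + a5*t^5 + a6*t^6)
      (a1 + 2*a2*x + 3*a3*x^2 + 4*a4*x^3 + 5*a5*x^4 + 6*a6*x^5) x := by
  have h : ∀ (n : ℕ) (c : ℝ), HasDerivAt (fun t : ℝ => c * t^n) (c * (n * x^(n-1))) x :=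
    fun n c => (hasDerivAt_pow n x).const_mul c
  have H0 := (hasDerivAt_const x a0).add ((hasDerivAt_id x).const_mul a1)
  have H1 := H0.add (h 2 a2)
  have H2 := H1.add (h 3 a3)
  have H3 := H2.add (h 4 a4)
  have H4 := H3.add (h 5 a5)
  have H5 := H4.add (h 6 a6)
  refine H5.congr_deriv ?_
  push_cast [id_eq]
  ring

lemma hdP (x : ℝ) : HasDerivAt (fun t : ℝ => (1 - t^2)^3) (-6*x+12*x^3-6*x^5) x := by
  have e : (fun t : ℝ => (1 - t^2)^3)
      = fun t : ℝ => 1 + 0*t + (-3)*t^2 + 0*t^3 + 3*t^4 + 0*t^5 + (-1)*t^6 := by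
    funext t; ring
  rw [e]; convert hasDerivAt_poly6 1 0 (-3) 0 3 0 (-1) x using 1; ring

lemma hdP1 (x : ℝ) : HasDerivAt (fun t : ℝ => -6*t+12*t^3-6*t^5) (-6+36*x^2-30*x^4) x := by
  have e : (fun t : ℝ => -6*t+12*t^3-6*t^5)
      = fun t : ℝ => 0 + (-6)*t + 0*t^2 + 12*t^3 + 0*t^4 + (-6)*t^5 + 0*t^6 := by
    funext t; ring
  rw [e]; convert hasDerivAt_poly6 0 (-6) 0 12 0 (-6) 0 x using 1; ring

lemma hdP2 (x : ℝ) : HasDerivAt (fun t : ℝ => -6+36*t^2-30*t^4) (72*x-120*x^3) x := by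
  have e : (fun t : ℝ => -6+36*t^2-30*t^4)
      = fun t : ℝ => (-6) + 0*t + 36*t^2 + 0*t^3 + (-30)*t^4 + 0*t^5 + 0*t^6 := by
    funext t; ring
  rw [e]; convert hasDerivAt_poly6 (-6) 0 36 0 (-30) 0 0 x using 1; ring

lemma hdG3 (x : ℝ) : HasDerivAt (fun t : ℝ => 72*t-120*t^3) (72-360*x^2) x := by
  have e : (fun t : ℝ => 72*t-120*t^3)
      = fun t : ℝ => 0 + 72*t + 0*t^2 + (-120)*t^3 + 0*t^4 + 0*t^5 + 0*t^6 := by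
    funext t; ring
  rw [e]; convert hasDerivAt_poly6 0 72 0 (-120) 0 0 0 x using 1; ring

lemma hdG4 (x : ℝ) : HasDerivAt (fun t : ℝ => 72-360*t^2) (-720*x) x := by
  have e : (fun t : ℝ => 72-360*t^2)
      = fun t : ℝ => 72 + 0*t + (-360)*t^2 + 0*t^3 + 0*t^4 + 0*t^5 + 0*t^6 := by
    funext t; ring
  rw [e]; convert hasDerivAt_poly6 72 0 (-360) 0 0 0 0 x using 1; ring

lemma hdQ (c x : ℝ) : HasDerivAt (fun t : ℝ => (1 - t^2)*(12 + c*(1 - t^2)))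
    (-24*x + c*(-4*x+4*x^3)) x := by
  have e : (fun t : ℝ => (1 - t^2)*(12 + c*(1 - t^2)))
      = fun t : ℝ => (12+c) + 0*t + (-12-2*c)*t^2 + 0*t^3 + c*t^4 + 0*t^5 + 0*t^6 := by
    funext t; ring
  rw [e]; convert hasDerivAt_poly6 (12+c) 0 (-12-2*c) 0 c 0 0 x using 1; ring

lemma e_dg : deriv (fun t : ℝ => (1 - t^2)^3) = fun x : ℝ => -6*x+12*x^3-6*x^5 :=
  funext fun x => (hdP x).deriv

lemma e_g2 : iteratedDeriv 2 (fun t : ℝ => (1 - t^2)^3) = fun x : ℝ => -6+36*x^2-30*x^4 := by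
  rw [iteratedDeriv_succ, iteratedDeriv_one, e_dg]
  exact funext fun x => (hdP1 x).deriv

lemma e_g3 : iteratedDeriv 3 (fun t : ℝ => (1 - t^2)^3) = fun x : ℝ => 72*x-120*x^3 := by
  rw [iteratedDeriv_succ, e_g2]
  exact funext fun x => (hdP2 x).deriv

/-- explicit value of LamK of g -/
noncomputable def LGfun (A B x : ℝ) : ℝ :=
  -((-6*x+12*x^3-6*x^5)*(72*x-120*x^3) + (1 - x^2)^3*(72-360*x^2))
  + (1 - x^2)*(12 + krallAlpha A B * (1 - x^2)) * (-6+36*x^2-30*x^4)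

lemma e_LamKg (A B x : ℝ) : LamK A B (fun t : ℝ => (1 - t^2)^3) x = LGfun A B x := by
  unfold LamK LGfun
  simp only [e_g3, e_g2]
  have h : deriv (fun t : ℝ => (1 - t^2)^3 * (72*t-120*t^3)) x
      = (-6*x+12*x^3-6*x^5)*(72*x-120*x^3) + (1 - x^2)^3*(72-360*x^2) :=
    ((hdP x).mul (hdG3 x)).deriv
  rw [h]

/-- explicit value of concOne of g -/
noncomputable def CGfun (A B x : ℝ) : ℝ :=
  -(((-6+36*x^2-30*x^4)*(72*x-120*x^3) + (-6*x+12*x^3-6*x^5)*(72-360*x^2))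
      + ((-6*x+12*x^3-6*x^5)*(72-360*x^2) + (1 - x^2)^3*(-720*x)))
  + ((-24*x + krallAlpha A B*(-4*x+4*x^3))*(-6+36*x^2-30*x^4)
      + (1 - x^2)*(12 + krallAlpha A B * (1 - x^2))*(72*x-120*x^3))
  - krallPi A B x * (-6*x+12*x^3-6*x^5)

lemma e_concOneg (A B x : ℝ) : concOne A B (fun t : ℝ => (1 - t^2)^3) x = CGfun A B x := by
  unfold concOne CGfun
  simp only [e_g3, e_g2, e_dg]
  have hprod : deriv (fun t : ℝ => (1 - t^2)^3 * (72*t-120*t^3))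
      = fun y : ℝ => (-6*y+12*y^3-6*y^5)*(72*y-120*y^3) + (1 - y^2)^3*(72-360*y^2) :=
    funext fun y => ((hdP y).mul (hdG3 y)).deriv
  rw [iteratedDeriv_succ, iteratedDeriv_one, hprod]
  have h2 : deriv (fun y : ℝ => (-6*y+12*y^3-6*y^5)*(72*y-120*y^3)
        + (1 - y^2)^3*(72-360*y^2)) x
      = ((-6+36*x^2-30*x^4)*(72*x-120*x^3) + (-6*x+12*x^3-6*x^5)*(72-360*x^2))
        + ((-6*x+12*x^3-6*x^5)*(72-360*x^2) + (1 - x^2)^3*(-720*x)) :=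
    (((hdP1 x).mul (hdG3 x)).add ((hdP x).mul (hdG4 x))).deriv
  have h3 : deriv (fun t : ℝ => (1 - t^2)*(12 + krallAlpha A B*(1 - t^2))*(-6+36*t^2-30*t^4)) x
      = (-24*x + krallAlpha A B*(-4*x+4*x^3))*(-6+36*x^2-30*x^4)
        + (1 - x^2)*(12 + krallAlpha A B * (1 - x^2))*(72*x-120*x^3) :=
    ((hdQ (krallAlpha A B) x).mul (hdP2 x)).deriv
  rw [h2, h3]

/-- explicit form of the concomitant [f, (1-x²)³]_K on the open set where f is C⁶. -/
noncomputable def Efun (A B : ℝ) (f : ℝ → ℝ) (x : ℝ) : ℝ :=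
  ( -(((-6+36*x^2-30*x^4) * deriv (deriv (deriv f)) x
        + (-6*x+12*x^3-6*x^5) * deriv (deriv (deriv (deriv f))) x)
      + ((-6*x+12*x^3-6*x^5) * deriv (deriv (deriv (deriv f))) x
        + (1 - x^2)^3 * deriv (deriv (deriv (deriv (deriv f)))) x))
    + ((-24*x + krallAlpha A B*(-4*x+4*x^3)) * deriv (deriv f) x
        + (1 - x^2)*(12 + krallAlpha A B * (1 - x^2)) * deriv (deriv (deriv f)) x)
    - krallPi A B x * deriv f x ) * (1 - x^2)^3
  - CGfun A B x * f x
  - ( -((-6*x+12*x^3-6*x^5) * deriv (deriv (deriv f)) x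
        + (1 - x^2)^3 * deriv (deriv (deriv (deriv f))) x)
      + (1 - x^2)*(12 + krallAlpha A B * (1 - x^2)) * deriv (deriv f) x ) * (-6*x+12*x^3-6*x^5)
  + LGfun A B x * deriv f x
  - (1 - x^2)^3 * (deriv (deriv (deriv f)) x * (-6+36*x^2-30*x^4)
      - deriv (deriv f) x * (72*x-120*x^3))

lemma Efun_one (A B : ℝ) (f : ℝ → ℝ) : Efun A B f 1 = 0 := by
  unfold Efun CGfun LGfun krallPi krallAlpha
  norm_num

lemma Efun_neg_one (A B : ℝ) (f : ℝ → ℝ) : Efun A B f (-1) = 0 := by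
  unfold Efun CGfun LGfun krallPi krallAlpha
  norm_num

/-- lim_{x→±1}[f,(1−x²)³]_K(x) = 0. -/
theorem krall_concomitant_with_one_minus_sq_cubed (A B : ℝ) (hA : 0 < A) (hB : 0 < B)
    (f : ℝ → ℝ) (U : Set ℝ) (hU : IsOpen U) (hUI : Set.Icc (-1 : ℝ) 1 ⊆ U)
    (hf : ContDiffOn ℝ 6 f U) :
    Filter.Tendsto (fun x => conc A B f (fun t => (1 - t^2)^3) x)
      (nhdsWithin 1 (Set.Ioo (-1 : ℝ) 1)) (nhds 0) ∧
    Filter.Tendsto (fun x => conc A B f (fun t => (1 - t^2)^3) x)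
      (nhdsWithin (-1) (Set.Ioo (-1 : ℝ) 1)) (nhds 0) := by
  have q0 := contDiffOn_deriv_step hU (n := 5) (by exact_mod_cast hf)
  have q1 := contDiffOn_deriv_step hU (n := 4) q0.2
  have q2 := contDiffOn_deriv_step hU (n := 3) q1.2
  have q3 := contDiffOn_deriv_step hU (n := 2) q2.2
  have q4 := contDiffOn_deriv_step hU (n := 1) q3.2
  -- HasDerivAt facts for the iterated derivatives of f on U
  have hd2 : ∀ y ∈ U, HasDerivAt (deriv f) (deriv (deriv f) y) y :=
    fun y hy => (q1.1.differentiableAt (hU.mem_nhds hy)).hasDerivAt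
  have hd3 : ∀ y ∈ U, HasDerivAt (deriv (deriv f)) (deriv (deriv (deriv f)) y) y :=
    fun y hy => (q2.1.differentiableAt (hU.mem_nhds hy)).hasDerivAt
  have hd4 : ∀ y ∈ U, HasDerivAt (deriv (deriv (deriv f)))
      (deriv (deriv (deriv (deriv f))) y) y :=
    fun y hy => (q3.1.differentiableAt (hU.mem_nhds hy)).hasDerivAt
  have hd5 : ∀ y ∈ U, HasDerivAt (deriv (deriv (deriv (deriv f))))
      (deriv (deriv (deriv (deriv (deriv f)))) y) y :=
    fun y hy => (q4.1.differentiableAt (hU.mem_nhds hy)).hasDerivAt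
  have i2 : iteratedDeriv 2 f = deriv (deriv f) := by
    rw [iteratedDeriv_succ, iteratedDeriv_one]
  have i3 : iteratedDeriv 3 f = deriv (deriv (deriv f)) := by
    rw [iteratedDeriv_succ, i2]
  -- key pointwise identity on U
  have key : ∀ x ∈ U, conc A B f (fun t => (1 - t^2)^3) x = Efun A B f x := by
    intro x hx
    have hLf : LamK A B f x
        = -((-6*x+12*x^3-6*x^5) * deriv (deriv (deriv f)) x
            + (1 - x^2)^3 * deriv (deriv (deriv (deriv f))) x)
          + (1 - x^2)*(12 + krallAlpha A B * (1 - x^2)) * deriv (deriv f) x := by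
      unfold LamK
      simp only [i3, i2]
      have h : deriv (fun t : ℝ => (1 - t^2)^3 * deriv (deriv (deriv f)) t) x
          = (-6*x+12*x^3-6*x^5) * deriv (deriv (deriv f)) x
            + (1 - x^2)^3 * deriv (deriv (deriv (deriv f))) x :=
        ((hdP x).mul (hd4 x hx)).deriv
      rw [h]
    have hCf : concOne A B f x
        = -(((-6+36*x^2-30*x^4) * deriv (deriv (deriv f)) x
              + (-6*x+12*x^3-6*x^5) * deriv (deriv (deriv (deriv f))) x)
            + ((-6*x+12*x^3-6*x^5) * deriv (deriv (deriv (deriv f))) x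
              + (1 - x^2)^3 * deriv (deriv (deriv (deriv (deriv f)))) x))
          + ((-24*x + krallAlpha A B*(-4*x+4*x^3)) * deriv (deriv f) x
              + (1 - x^2)*(12 + krallAlpha A B * (1 - x^2)) * deriv (deriv (deriv f)) x)
          - krallPi A B x * deriv f x := by
      unfold concOne
      simp only [i3, i2]
      rw [iteratedDeriv_succ, iteratedDeriv_one]
      have hev : deriv (fun t : ℝ => (1 - t^2)^3 * deriv (deriv (deriv f)) t)
          =ᶠ[nhds x] fun y : ℝ => (-6*y+12*y^3-6*y^5) * deriv (deriv (deriv f)) y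
            + (1 - y^2)^3 * deriv (deriv (deriv (deriv f))) y := by
        filter_upwards [hU.mem_nhds hx] with y hy
        exact ((hdP y).mul (hd4 y hy)).deriv
      rw [hev.deriv_eq]
      have h2 : deriv (fun y : ℝ => (-6*y+12*y^3-6*y^5) * deriv (deriv (deriv f)) y
            + (1 - y^2)^3 * deriv (deriv (deriv (deriv f))) y) x
          = ((-6+36*x^2-30*x^4) * deriv (deriv (deriv f)) x
              + (-6*x+12*x^3-6*x^5) * deriv (deriv (deriv (deriv f))) x)
            + ((-6*x+12*x^3-6*x^5) * deriv (deriv (deriv (deriv f))) x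
              + (1 - x^2)^3 * deriv (deriv (deriv (deriv (deriv f)))) x) :=
        (((hdP1 x).mul (hd4 x hx)).add ((hdP x).mul (hd5 x hx))).deriv
      have h3 : deriv (fun t : ℝ => (1 - t^2)*(12 + krallAlpha A B * (1 - t^2))
            * deriv (deriv f) t) x
          = (-24*x + krallAlpha A B*(-4*x+4*x^3)) * deriv (deriv f) x
            + (1 - x^2)*(12 + krallAlpha A B * (1 - x^2)) * deriv (deriv (deriv f)) x :=
        ((hdQ (krallAlpha A B) x).mul (hd3 x hx)).deriv
      rw [h2, h3]
    unfold conc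
    rw [hCf, hLf, e_concOneg, e_LamKg, e_dg]
    simp only [i3, i2, e_g2, e_g3]
    unfold Efun
    ring
  have main : ∀ c : ℝ, c ∈ U → Efun A B f c = 0 →
      Filter.Tendsto (fun x => conc A B f (fun t => (1 - t^2)^3) x)
        (nhdsWithin c (Set.Ioo (-1 : ℝ) 1)) (nhds 0) := by
    intro c hc h0
    have hcf : ContinuousAt f c := hf.continuousOn.continuousAt (hU.mem_nhds hc)
    have hc1 : ContinuousAt (deriv f) c := q0.2.continuousOn.continuousAt (hU.mem_nhds hc)
    have hc2 : ContinuousAt (deriv (deriv f)) c :=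
      q1.2.continuousOn.continuousAt (hU.mem_nhds hc)
    have hc3 : ContinuousAt (deriv (deriv (deriv f))) c :=
      q2.2.continuousOn.continuousAt (hU.mem_nhds hc)
    have hc4 : ContinuousAt (deriv (deriv (deriv (deriv f)))) c :=
      q3.2.continuousOn.continuousAt (hU.mem_nhds hc)
    have hc5 : ContinuousAt (deriv (deriv (deriv (deriv (deriv f))))) c :=
      q4.2.continuousOn.continuousAt (hU.mem_nhds hc)
    have hE : ContinuousAt (Efun A B f) c := by
      unfold Efun CGfun LGfun krallPi krallAlpha
      fun_prop
    have tendE : Filter.Tendsto (Efun A B f)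
        (nhdsWithin c (Set.Ioo (-1 : ℝ) 1)) (nhds 0) := by
      have h := hE.continuousWithinAt (s := Set.Ioo (-1 : ℝ) 1)
      rw [ContinuousWithinAt, h0] at h
      exact h
    refine tendE.congr' ?_
    filter_upwards [self_mem_nhdsWithin] with x hx
    exact (key x (hUI (Ioo_subset_Icc_self hx))).symm
  constructor
  · exact main 1 (hUI (by norm_num)) (Efun_one A B f)
  · exact main (-1) (hUI (by norm_num)) (Efun_neg_one A B f)
end

section
/- With t₁(x) = √A near x = −1 and 0 near x = 1, and t₂(x) = 0 near x = −1 and √B near x = 1 (both C⁶ on [−1,1]), the symmetry conditions [tᵢ,tⱼ]_H = 0 hold for i,j ∈ {1,2}, where [f,g]_H = [f,g]_K(1) − [f,g]_K(−1). -/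
open Set Filter Topology intervalIntegral

/-! Near each endpoint both `t₁` and `t₂` are constant. Every term of the concomitant
`[f,g]_K` carries a derivative of order at least one of `f` or of `g`, so `[tᵢ,tⱼ]_K`
vanishes identically near `±1`; both boundary limits are `0`. -/

theorem Filter.EventuallyEq.mul_left_eventuallyEq_zero {α M : Type*} [MulZeroClass M]
    {l : Filter α} {g : α → M} (w : α → M) (h : g =ᶠ[l] 0) : (fun t ↦ w t * g t) =ᶠ[l] 0 :=
  h.mono fun _ hy ↦ by simp [hy]

section LocallyConstant

variable {𝕜 F : Type*} [NontriviallyNormedField 𝕜] [NormedAddCommGroup F] [NormedSpace 𝕜 F]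
  {f g : 𝕜 → F} {x : 𝕜}

theorem Filter.EventuallyEq.iteratedDeriv_eq_zero (h : g =ᶠ[𝓝 x] 0) (n : ℕ) :
    iteratedDeriv n g x = 0 := by
  rw [h.iteratedDeriv_eq n, iteratedDeriv_const_zero]

theorem Filter.EventuallyEq.deriv_eq_zero (h : g =ᶠ[𝓝 x] 0) : deriv g x = 0 := by
  rw [h.deriv_eq, Pi.zero_def, deriv_const]

variable {c : F} (hf : f =ᶠ[𝓝 x] fun _ ↦ c)
include hf

theorem Filter.EventuallyEq.deriv_eq_zero_of_const : deriv f x = 0 := by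
  rw [hf.deriv_eq, deriv_const]

theorem Filter.EventuallyEq.iteratedDeriv_succ_eventuallyEq_zero (n : ℕ) :
    iteratedDeriv (n + 1) f =ᶠ[𝓝 x] 0 :=
  (hf.iteratedDeriv (n + 1)).trans (.of_forall fun _ ↦ by simp [iteratedDeriv_const])

theorem Filter.EventuallyEq.iteratedDeriv_succ_eq_zero (n : ℕ) : iteratedDeriv (n + 1) f x = 0 :=
  (hf.iteratedDeriv_succ_eventuallyEq_zero n).eq_of_nhds

end LocallyConstant

section KrallConcomitant

variable (A B : ℝ) {f g : ℝ → ℝ} {x c d : ℝ}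

theorem LamK_eq_zero_of_eventuallyEq_const (hf : f =ᶠ[𝓝 x] fun _ ↦ c) : LamK A B f x = 0 := by
  have h3 := (hf.iteratedDeriv_succ_eventuallyEq_zero 2).mul_left_eventuallyEq_zero
    fun t ↦ (1 - t ^ 2) ^ 3
  rw [LamK, h3.deriv_eq_zero, hf.iteratedDeriv_succ_eq_zero 1]
  simp

theorem concOne_eq_zero_of_eventuallyEq_const (hf : f =ᶠ[𝓝 x] fun _ ↦ c) :
    concOne A B f x = 0 := by
  have h3 := (hf.iteratedDeriv_succ_eventuallyEq_zero 2).mul_left_eventuallyEq_zero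
    fun t ↦ (1 - t ^ 2) ^ 3
  have h2 := (hf.iteratedDeriv_succ_eventuallyEq_zero 1).mul_left_eventuallyEq_zero
    fun t ↦ (1 - t ^ 2) * (12 + krallAlpha A B * (1 - t ^ 2))
  rw [concOne, h3.iteratedDeriv_eq_zero, h2.deriv_eq_zero, hf.deriv_eq_zero_of_const]
  simp

theorem conc_eq_zero_of_eventuallyEq_const (hf : f =ᶠ[𝓝 x] fun _ ↦ c)
    (hg : g =ᶠ[𝓝 x] fun _ ↦ d) : conc A B f g x = 0 := by
  rw [conc, concOne_eq_zero_of_eventuallyEq_const A B hf,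
    concOne_eq_zero_of_eventuallyEq_const A B hg, LamK_eq_zero_of_eventuallyEq_const A B hf,
    LamK_eq_zero_of_eventuallyEq_const A B hg, hf.deriv_eq_zero_of_const,
    hg.deriv_eq_zero_of_const, hf.iteratedDeriv_succ_eq_zero 1, hg.iteratedDeriv_succ_eq_zero 1]
  simp

theorem conc_eqOn_zero_of_eqOn_const {s : Set ℝ} (hs : IsOpen s) (hf : EqOn f (fun _ ↦ c) s)
    (hg : EqOn g (fun _ ↦ d) s) : EqOn (conc A B f g) 0 s := fun _ hx ↦
  conc_eq_zero_of_eventuallyEq_const A B (eventuallyEq_of_mem (hs.mem_nhds hx) hf)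
    (eventuallyEq_of_mem (hs.mem_nhds hx) hg)

end KrallConcomitant

theorem krall_partial_gkn_symmetry_general (A B : ℝ)
    (t₁ t₂ : ℝ → ℝ)
    (ε : ℝ) (hε : 0 < ε)
    (ht₁l : ∀ x ∈ Set.Ioo (-1 : ℝ) (-1 + ε), t₁ x = Real.sqrt A)
    (ht₁r : ∀ x ∈ Set.Ioo (1 - ε : ℝ) 1, t₁ x = 0)
    (ht₂l : ∀ x ∈ Set.Ioo (-1 : ℝ) (-1 + ε), t₂ x = 0)
    (ht₂r : ∀ x ∈ Set.Ioo (1 - ε : ℝ) 1, t₂ x = Real.sqrt B) :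
    ∀ u ∈ ({t₁, t₂} : Set (ℝ → ℝ)), ∀ v ∈ ({t₁, t₂} : Set (ℝ → ℝ)),
      ∃ L₁ L₂ : ℝ,
        Filter.Tendsto (conc A B u v) (nhdsWithin 1 (Set.Ioo (-1 : ℝ) 1)) (nhds L₁) ∧
        Filter.Tendsto (conc A B u v) (nhdsWithin (-1) (Set.Ioo (-1 : ℝ) 1)) (nhds L₂) ∧
        L₁ - L₂ = 0 := by
  have hends : ∀ w ∈ ({t₁, t₂} : Set (ℝ → ℝ)),
      (∃ c, EqOn w (fun _ ↦ c) (Ioo (-1) (-1 + ε))) ∧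
        ∃ c, EqOn w (fun _ ↦ c) (Ioo (1 - ε) 1) := by
    rintro w (rfl | rfl)
    exacts [⟨⟨_, ht₁l⟩, ⟨_, ht₁r⟩⟩, ⟨⟨_, ht₂l⟩, ⟨_, ht₂r⟩⟩]
  intro u hu v hv
  obtain ⟨⟨_, huL⟩, ⟨_, huR⟩⟩ := hends u hu
  obtain ⟨⟨_, hvL⟩, ⟨_, hvR⟩⟩ := hends v hv
  have hR : Ioo (1 - ε) 1 ∈ 𝓝[Ioo (-1) 1] (1 : ℝ) :=
    nhdsWithin_mono _ Ioo_subset_Iio_self (Ioo_mem_nhdsLT (by linarith))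
  have hL : Ioo (-1) (-1 + ε) ∈ 𝓝[Ioo (-1) 1] (-1 : ℝ) :=
    nhdsWithin_mono _ Ioo_subset_Ioi_self (Ioo_mem_nhdsGT (by linarith))
  refine ⟨0, 0, ?_, ?_, sub_self 0⟩
  · exact tendsto_const_nhds.congr'
      (eventuallyEq_of_mem hR (conc_eqOn_zero_of_eqOn_const A B isOpen_Ioo huR hvR).symm)
  · exact tendsto_const_nhds.congr'
      (eventuallyEq_of_mem hL (conc_eqOn_zero_of_eqOn_const A B isOpen_Ioo huL hvL).symm)

/-- the symmetry conditions [tᵢ,tⱼ]_H = 0 hold for the partial GKN set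
t₁, t₂, where [f,g]_H = [f,g]_K(1) − [f,g]_K(−1) (limits at the endpoints). -/
theorem krall_partial_gkn_symmetry (A B : ℝ) (hA : 0 < A) (hB : 0 < B)
    (t₁ t₂ : ℝ → ℝ)
    (ht₁ : ContDiffOn ℝ 6 t₁ (Set.Ioo (-1 : ℝ) 1))
    (ht₂ : ContDiffOn ℝ 6 t₂ (Set.Ioo (-1 : ℝ) 1))
    (ε : ℝ) (hε : 0 < ε)
    (ht₁l : ∀ x ∈ Set.Ioo (-1 : ℝ) (-1 + ε), t₁ x = Real.sqrt A)
    (ht₁r : ∀ x ∈ Set.Ioo (1 - ε : ℝ) 1, t₁ x = 0)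
    (ht₂l : ∀ x ∈ Set.Ioo (-1 : ℝ) (-1 + ε), t₂ x = 0)
    (ht₂r : ∀ x ∈ Set.Ioo (1 - ε : ℝ) 1, t₂ x = Real.sqrt B) :
    ∀ u ∈ ({t₁, t₂} : Set (ℝ → ℝ)), ∀ v ∈ ({t₁, t₂} : Set (ℝ → ℝ)),
      ∃ L₁ L₂ : ℝ,
        Filter.Tendsto (conc A B u v) (nhdsWithin 1 (Set.Ioo (-1 : ℝ) 1)) (nhds L₁) ∧
        Filter.Tendsto (conc A B u v) (nhdsWithin (-1) (Set.Ioo (-1 : ℝ) 1)) (nhds L₂) ∧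
        L₁ - L₂ = 0 :=
  krall_partial_gkn_symmetry_general A B t₁ t₂ ε hε ht₁l ht₁r ht₂l ht₂r
end
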